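/- arXiv:2110.09190 — 5 statements merged into one kernel-verified Lean document; each statement's English description precedes it below -/
import Mathlib

section
/- For the path graph P_n on n vertices (n ≥ 1), the secure domination number of P_n equals ⌈3n/7⌉. -/
open SimpleGraph

/-- `D` is a dominating set of the simple graph `H`. -/
def Dominates {W : Type*} (H : SimpleGraph W) (D : Set W) : Prop :=
  ∀ v ∉ D, ∃ u ∈ D, H.Adj u v

/-- `D` is a secure dominating set of `H`: it is dominating, and every vertex outside `D`
has a neighbour `v ∈ D` whose swap keeps the set dominating. -/
def SecureDominates {W : Type*} (H : SimpleGraph W) (D : Set W) : Prop :=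
  Dominates H D ∧ ∀ u ∉ D, ∃ v ∈ D, H.Adj u v ∧ Dominates H ((D \ {v}) ∪ {u})

/-- The domination number `γ(H)`. -/
noncomputable def domNum {W : Type*} (H : SimpleGraph W) : ℕ :=
  sInf {n | ∃ D : Set W, Dominates H D ∧ D.ncard = n}

/-- The secure domination number `γₛ(H)`. -/
noncomputable def secDomNum {W : Type*} (H : SimpleGraph W) : ℕ :=
  sInf {n | ∃ D : Set W, SecureDominates H D ∧ D.ncard = n}

/-- The edges of `G`, oriented from smaller to larger endpoint. -/
abbrev OEdge {V : Type*} (G : SimpleGraph V) [LinearOrder V] : Type _ :=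
  {p : V × V // G.Adj p.1 p.2 ∧ p.1 < p.2}

/-- The `k`-subdivision `G^{1/k}` (for `k ≥ 2`): each edge `uv` (with `u < v`) is replaced by the
path `u, x₁, …, x_{k-1}, v` of length `k`, the `x_i` being new internal vertices. -/
def Subdiv {V : Type*} (G : SimpleGraph V) [LinearOrder V] (k : ℕ) :
    SimpleGraph (V ⊕ (OEdge G × Fin (k - 1))) :=
  SimpleGraph.fromRel (fun a b =>
    match a, b with
    | Sum.inl u, Sum.inr ⟨e, i⟩ => (i.val = 0 ∧ u = e.val.1) ∨ (i.val = k - 2 ∧ u = e.val.2)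
    | Sum.inr ⟨e, i⟩, Sum.inr ⟨f, j⟩ => e = f ∧ i.val + 1 = j.val
    | _, _ => False)

/-- The star graph `K_{1,n-1}` on `Fin n`, with centre `0`. -/
def starGraph (n : ℕ) : SimpleGraph (Fin n) :=
  SimpleGraph.fromRel (fun a _ => a.val = 0)

/-- `G` is a star graph: some centre is adjacent to exactly the other vertices, and there
are no other edges. -/
def IsStar {V : Type*} (G : SimpleGraph V) : Prop :=
  ∃ c : V, ∀ u v : V, G.Adj u v ↔ (u ≠ v ∧ (u = c ∨ v = c))

/-!
Identify a set of vertices of `Pₙ` with its set `S ⊆ {0, …, n - 1}` of positions. Swapping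
`u ∉ S` with its neighbour `u ± 1 ∈ S` keeps `S` dominating exactly when the vertex `u ± 2`
beyond is absent, in `S`, or dominated by `u ± 3 ∈ S`; this makes secure domination a local
condition (`PathSecure`).

Lower bound, by discharging: charge `3` to a guarding neighbour in `S` for each vertex outside
`S`. A vertex `w` guarding both its neighbours (charge `6`) forces `w ± 2 ∈ S`, and `w ± 2`
cannot guard `w ± 1`; so passing `1` from `w` to each of `w ± 2` leaves every vertex of `S`
with charge at most `4`. Hence `3 (n - |S|) ≤ 4 |S|`, i.e. `|S| ≥ 3n/7`.

Upper bound: the word `0101010`, repeated, is secure and has `⌈3n/7⌉` ones.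
-/

open Finset

namespace Dominates

variable {W : Type*} {G : SimpleGraph W} {D : Set W} {u v w : W}

theorem exists_adj_ne_of_swap (h : Dominates G (D \ {v} ∪ {u})) (hw : w ∉ D) (hwu : w ≠ u)
    (huw : ¬G.Adj u w) : ∃ x ∈ D, x ≠ v ∧ G.Adj x w := by
  obtain ⟨x, hx, hxw⟩ := h w (by simp [hw, hwu])
  rcases hx with ⟨hxD, hxv⟩ | rfl
  · exact ⟨x, hxD, hxv, hxw⟩
  · exact absurd hxw huw

theorem swap (hD : Dominates G D) (huv : G.Adj u v)
    (h : ∀ w ∉ D, w ≠ u → G.Adj v w → ¬G.Adj u w → ∃ x ∈ D, x ≠ v ∧ G.Adj x w) :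
    Dominates G (D \ {v} ∪ {u}) := by
  intro w hw
  simp only [Set.mem_union, Set.mem_sdiff, Set.mem_singleton_iff, not_or,
    not_and_not_right] at hw
  by_cases hwv : w = v
  · exact ⟨u, Or.inr rfl, hwv ▸ huv⟩
  have hwD : w ∉ D := fun h' => hwv (hw.1 h')
  obtain ⟨x, hx, hxw⟩ := hD w hwD
  by_cases hxv : x = v
  · subst hxv
    by_cases huw : G.Adj u w
    · exact ⟨u, Or.inr rfl, huw⟩
    obtain ⟨y, hy, hyx, hyw⟩ := h w hwD hw.2 hxw huw
    exact ⟨y, Or.inl ⟨hy, hyx⟩, hyw⟩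
  · exact ⟨x, Or.inl ⟨hx, hxv⟩, hxw⟩

end Dominates

def LeftGuarded (S : Finset ℕ) (u : ℕ) : Prop :=
  1 ≤ u ∧ u - 1 ∈ S ∧ (2 ≤ u → u - 2 ∉ S → 3 ≤ u ∧ u - 3 ∈ S)

def RightGuarded (n : ℕ) (S : Finset ℕ) (u : ℕ) : Prop :=
  u + 1 ∈ S ∧ (u + 2 < n → u + 2 ∉ S → u + 3 ∈ S)

def PathSecure (n : ℕ) (S : Finset ℕ) : Prop :=
  ∀ u < n, u ∉ S → LeftGuarded S u ∨ RightGuarded n S u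

section PathGraph

variable {n : ℕ} {S : Finset ℕ}

theorem ncard_setOf_val_mem (hS : S ⊆ range n) : {v : Fin n | ↑v ∈ S}.ncard = S.card := by
  rw [← Set.ncard_image_of_injective _ Fin.val_injective, ← Set.ncard_coe_finset]
  congr
  ext i
  constructor
  · rintro ⟨x, hx, rfl⟩
    exact hx
  · exact fun hi => ⟨⟨i, mem_range.mp (hS hi)⟩, hi, rfl⟩

theorem rightGuarded_of_swap {u v : Fin n} (hv : ↑v ∈ S) (huv : u.val + 1 = v)
    (h : Dominates (pathGraph n) ({w : Fin n | ↑w ∈ S} \ {v} ∪ {u})) : RightGuarded n S u := by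
  refine ⟨huv ▸ hv, fun h2 hz => ?_⟩
  obtain ⟨x, hx, hxv, hxw⟩ := h.exists_adj_ne_of_swap (w := ⟨u + 2, h2⟩) hz
    (by simp [Fin.ext_iff]) (by simp [pathGraph_adj]; omega)
  have hxv : x.val ≠ v := fun e => hxv (Fin.ext e)
  simp only [pathGraph_adj] at hxw
  rwa [show u.val + 3 = x by omega]

theorem leftGuarded_of_swap {u v : Fin n} (hv : ↑v ∈ S) (huv : v.val + 1 = u)
    (h : Dominates (pathGraph n) ({w : Fin n | ↑w ∈ S} \ {v} ∪ {u})) : LeftGuarded S u := by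
  refine ⟨by omega, by rwa [← huv, Nat.add_sub_cancel], fun h2 hz => ?_⟩
  obtain ⟨x, hx, hxv, hxw⟩ := h.exists_adj_ne_of_swap (w := ⟨u - 2, by omega⟩) hz
    (by simp [Fin.ext_iff]; omega) (by simp [pathGraph_adj]; omega)
  have hxv : x.val ≠ v := fun e => hxv (Fin.ext e)
  simp only [pathGraph_adj] at hxw
  exact ⟨by omega, by rwa [show u.val - 3 = x by omega]⟩

theorem PathSecure.of_secureDominates
    (h : SecureDominates (pathGraph n) {v : Fin n | ↑v ∈ S}) : PathSecure n S := by
  intro u hu hz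
  obtain ⟨v, hv, huv, hswap⟩ := h.2 ⟨u, hu⟩ hz
  rcases pathGraph_adj.mp huv with huv | huv
  · exact .inr (rightGuarded_of_swap hv huv hswap)
  · exact .inl (leftGuarded_of_swap hv huv hswap)

theorem PathSecure.secureDominates (hS : S ⊆ range n) (h : PathSecure n S) :
    SecureDominates (pathGraph n) {v : Fin n | ↑v ∈ S} := by
  have hdom : Dominates (pathGraph n) {v : Fin n | ↑v ∈ S} := by
    intro w hw
    rcases h w w.isLt hw with ⟨h1, hl, -⟩ | ⟨hr, -⟩
    · exact ⟨⟨w - 1, by omega⟩, hl, by simp [pathGraph_adj]; omega⟩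
    · exact ⟨⟨w + 1, mem_range.mp (hS hr)⟩, hr, by simp [pathGraph_adj]⟩
  refine ⟨hdom, fun u hu => ?_⟩
  rcases h u u.isLt hu with ⟨h1, hl, hl'⟩ | ⟨hr, hr'⟩
  · refine ⟨⟨u - 1, by omega⟩, hl, by simp [pathGraph_adj]; omega,
      hdom.swap (by simp [pathGraph_adj]; omega) fun w hw hwu hvw huw => ?_⟩
    simp only [pathGraph_adj, ne_eq, Fin.ext_iff] at hvw huw hwu
    obtain ⟨h3, hx⟩ := hl' (by omega) (by rwa [show u.val - 2 = w by omega])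
    exact ⟨⟨u - 3, by omega⟩, hx, by simp [Fin.ext_iff]; omega,
      by simp [pathGraph_adj]; omega⟩
  · refine ⟨⟨u + 1, mem_range.mp (hS hr)⟩, hr, by simp [pathGraph_adj],
      hdom.swap (by simp [pathGraph_adj]) fun w hw hwu hvw huw => ?_⟩
    simp only [pathGraph_adj, ne_eq, Fin.ext_iff] at hvw huw hwu
    have hx := hr' (by omega) (by rwa [show u.val + 2 = w by omega])
    exact ⟨⟨u + 3, mem_range.mp (hS hx)⟩, hx, by simp [Fin.ext_iff],
      by simp [pathGraph_adj]; omega⟩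

end PathGraph

section Counting

variable {n : ℕ} {S : Finset ℕ} {w : ℕ}

-- A vertex outside `S` is assigned to its left neighbour when it is `LeftGuarded`, and to its
-- right neighbour otherwise.
def GuardsLeft (S : Finset ℕ) (w : ℕ) : Prop :=
  1 ≤ w ∧ w - 1 ∉ S ∧ ¬LeftGuarded S (w - 1)

def GuardsRight (n : ℕ) (S : Finset ℕ) (w : ℕ) : Prop :=
  w + 1 < n ∧ w + 1 ∉ S ∧ LeftGuarded S (w + 1)

open Classical in
theorem PathSecure.card_sdiff_le (h : PathSecure n S) :
    (range n \ S).card ≤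
      ∑ w ∈ S, ((if GuardsLeft S w then 1 else 0) + if GuardsRight n S w then 1 else 0) := by
  calc (range n \ S).card
      ≤ (S.biUnion fun w => (if GuardsLeft S w then {w - 1} else ∅) ∪
          if GuardsRight n S w then {w + 1} else ∅).card := by
        refine card_le_card fun u hu => ?_
        rw [mem_sdiff, mem_range] at hu
        rw [mem_biUnion]
        by_cases hl : LeftGuarded S u
        · refine ⟨u - 1, hl.2.1, ?_⟩
          simp [GuardsRight, Nat.sub_add_cancel hl.1, hu, hl]
        · have hr := (h u hu.1 hu.2).resolve_left hl
          refine ⟨u + 1, hr.1, ?_⟩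
          simp [GuardsLeft, hu, hl]
    _ ≤ _ := card_biUnion_le
    _ ≤ _ := sum_le_sum fun w _ => (card_union_le _ _).trans (by split_ifs <;> simp)

theorem PathSecure.add_two_mem_of_guards (h : PathSecure n S) (hl : GuardsLeft S w)
    (hr : GuardsRight n S w) : w + 2 ∈ S := by
  obtain ⟨h1, hz, hnl⟩ := hl
  obtain ⟨hlt, hz', -⟩ := hr
  have := ((h (w - 1) (by omega) hz).resolve_left hnl).2 (by omega)
    (by rwa [show w - 1 + 2 = w + 1 by omega])
  rwa [show w - 1 + 3 = w + 2 by omega] at this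

theorem sub_two_mem_of_guards (hl : GuardsLeft S w) (hr : GuardsRight n S w) :
    2 ≤ w ∧ w - 2 ∈ S := by
  obtain ⟨h1, hz, -⟩ := hl
  have := hr.2.2.2.2 (by omega) (by rwa [show w + 1 - 2 = w - 1 by omega])
  rw [show w + 1 - 3 = w - 2 by omega] at this
  exact ⟨by omega, this.2⟩

theorem not_guardsLeft_add_two (hr : GuardsRight n S w) : ¬GuardsLeft S (w + 2) :=
  fun hl => hl.2.2 (by rw [show w + 2 - 1 = w + 1 by omega]; exact hr.2.2)

theorem not_guardsRight_sub_two (hw : 2 ≤ w) (hl : GuardsLeft S w) :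
    ¬GuardsRight n S (w - 2) :=
  fun hr => hl.2.2 (by rw [show w - 1 = w - 2 + 1 by omega]; exact hr.2.2)

open Classical in
theorem PathSecure.three_mul_le_seven_mul_card (hS : S ⊆ range n) (h : PathSecure n S) :
    3 * n ≤ 7 * S.card := by
  set T := S.filter fun w => GuardsLeft S w ∧ GuardsRight n S w
  set R := T.image (· + 2)
  set L := T.image (· - 2)
  have hRS : R ⊆ S := by
    simp only [R, image_subset_iff, T, mem_filter]
    exact fun w ⟨_, hl, hr⟩ => h.add_two_mem_of_guards hl hr
  have hLS : L ⊆ S := by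
    simp only [L, image_subset_iff, T, mem_filter]
    exact fun w ⟨_, hl, hr⟩ => (sub_two_mem_of_guards hl hr).2
  have hR : R.card = T.card := card_image_of_injective _ (add_left_injective 2)
  have hL : L.card = T.card := by
    refine card_image_of_injOn fun a ha b hb hab => ?_
    simp only [T, coe_filter, Set.mem_ofPred_eq] at ha hb
    have := (sub_two_mem_of_guards ha.2.1 ha.2.2).1
    have := (sub_two_mem_of_guards hb.2.1 hb.2.2).1
    omega
  have hdischarge : ∀ w ∈ S,
      3 * ((if GuardsLeft S w then 1 else 0) + if GuardsRight n S w then 1 else 0) +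
        (if w ∈ R then 1 else 0) + (if w ∈ L then 1 else 0) ≤
      4 + 2 * if w ∈ T then 1 else 0 := by
    intro w hw
    have hR' : w ∈ R → ¬GuardsLeft S w := by
      simp only [R, T, mem_image, mem_filter]
      rintro ⟨v, ⟨-, -, hr⟩, rfl⟩
      exact not_guardsLeft_add_two hr
    have hL' : w ∈ L → ¬GuardsRight n S w := by
      simp only [L, T, mem_image, mem_filter]
      rintro ⟨v, ⟨-, hl, hr⟩, rfl⟩
      exact not_guardsRight_sub_two (sub_two_mem_of_guards hl hr).1 hl
    have hT : w ∈ T ↔ GuardsLeft S w ∧ GuardsRight n S w := by simp [T, hw]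
    split_ifs <;> simp_all
  have hTS : S ∩ T = T := inter_eq_right.mpr (filter_subset _ _)
  have hsum := sum_le_sum hdischarge
  simp only [sum_add_distrib, ← mul_sum, sum_ite_mem, inter_eq_right.mpr hRS,
    inter_eq_right.mpr hLS, hTS, sum_const, smul_eq_mul, mul_one, hR, hL] at hsum
  have hZ := h.card_sdiff_le
  rw [card_sdiff_of_subset hS, card_range, sum_add_distrib] at hZ
  omega

end Counting

section Pattern

/-- The word `0101010` repeated, shifted by one place when `n % 7` is odd, so that the
path does not end in an unguarded vertex. -/
def securePattern (n : ℕ) : Finset ℕ :=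
  (range n).filter fun i => (i + n % 7 % 2) % 7 % 2 = 1

theorem pathSecure_securePattern (n : ℕ) : PathSecure n (securePattern n) := by
  intro u hu hz
  simp only [securePattern, LeftGuarded, RightGuarded, mem_filter, mem_range] at hz ⊢
  generalize hc : n % 7 % 2 = c at hz ⊢
  by_cases hr : (u + c) % 7 = 0 ∨ (u + c) % 7 = 2
  · exact .inr ⟨by omega, fun _ _ => by omega⟩
  · have h1 : (u - 1 + c) % 7 = (u + c) % 7 - 1 := by omega
    have h3 : (u - 3 + c) % 7 = (u + c) % 7 - 3 := by omega
    exact .inl ⟨by omega, by omega, fun _ _ => by omega⟩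

theorem count_mod_seven_odd {c : ℕ} (hc : c ≤ 1) (m : ℕ) :
    Nat.count (fun i => (i + c) % 7 % 2 = 1) m = 3 * ((m + c) / 7) + (m + c) % 7 / 2 := by
  induction m with
  | zero => simp; omega
  | succ m ih => rw [Nat.count_succ, ih]; split_ifs <;> omega

theorem card_securePattern (n : ℕ) : (securePattern n).card = (3 * n + 6) / 7 := by
  rw [securePattern, ← Nat.count_eq_card_filter_range, count_mod_seven_odd (by omega)]
  have : n % 7 < 7 := Nat.mod_lt _ (by norm_num)
  interval_cases h : n % 7 <;> omega

end Pattern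

theorem three_mul_le_seven_mul_ncard_of_secureDominates {n : ℕ} {D : Set (Fin n)}
    (h : SecureDominates (pathGraph n) D) : 3 * n ≤ 7 * D.ncard := by
  set S := D.toFinite.toFinset.map Fin.valEmbedding
  have hS : S ⊆ range n := by
    intro i
    simp only [S, mem_map, Set.Finite.mem_toFinset, Fin.valEmbedding_apply, mem_range]
    rintro ⟨x, -, rfl⟩
    exact x.isLt
  have hD : D = {v : Fin n | ↑v ∈ S} := by ext v; simp [S, Fin.val_inj]
  rw [hD] at h ⊢
  rw [ncard_setOf_val_mem hS]
  exact (PathSecure.of_secureDominates h).three_mul_le_seven_mul_card hS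

theorem stmt_1_general (n : ℕ) :
    secDomNum (SimpleGraph.pathGraph n) = (3 * n + 6) / 7 := by
  have hS : securePattern n ⊆ range n := filter_subset _ _
  have hmem : (3 * n + 6) / 7 ∈
      {k | ∃ D : Set (Fin n), SecureDominates (pathGraph n) D ∧ D.ncard = k} :=
    ⟨_, (pathSecure_securePattern n).secureDominates hS,
      by rw [ncard_setOf_val_mem hS, card_securePattern]⟩
  refine le_antisymm (Nat.sInf_le hmem) (le_csInf ⟨_, hmem⟩ ?_)
  rintro _ ⟨D, hD, rfl⟩
  have := three_mul_le_seven_mul_ncard_of_secureDominates hD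
  omega

/-- For the path `Pₙ` on `n ≥ 1` vertices, `γₛ(Pₙ) = ⌈3n/7⌉`. -/
theorem stmt_1 (n : ℕ) (hn : 1 ≤ n) :
    secDomNum (SimpleGraph.pathGraph n) = (3 * n + 6) / 7 :=
  stmt_1_general n
end

section
/- Let G be a finite simple connected graph that is not a star graph. Then the secure domination number of the 2-subdivision G^{1/2} satisfies γ_s(G^{1/2}) ≤ min{|E(G)|, |V(G)|}. -/
open SimpleGraph

/-!
Two secure dominating sets of `G^{1/2}` give the two bounds. The original vertices form one:
a subdivision vertex `x_e` swaps with an endpoint `a` of `e`, and every other `x_f` keeps an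
endpoint of `f` different from `a`. The subdivision vertices form the other: since `G` is
connected and not a star, every vertex `v` lies on a path `v w x` with `x ≠ v`, and `v` swaps
with `x_{vw}`; afterwards `w` is still dominated by `x_{wx}`, and every other vertex by any
subdivision vertex on one of its edges.
-/

section Domination

variable {W : Type*} {H : SimpleGraph W} {D : Set W}

lemma dominates_swap {u v : W} (huv : H.Adj u v)
    (h : ∀ z ∉ D, z ≠ u → ∃ w ∈ D, w ≠ v ∧ H.Adj w z) :
    Dominates H ((D \ {v}) ∪ {u}) := by
  intro z hz
  simp only [Set.mem_union, Set.mem_sdiff, Set.mem_singleton_iff, not_or, not_and, not_not]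
    at hz
  obtain ⟨hzD, hzu⟩ := hz
  by_cases hzv : z = v
  · exact ⟨u, Or.inr rfl, hzv ▸ huv⟩
  · obtain ⟨w, hwD, hwv, hwz⟩ := h z (fun hz => hzv (hzD hz)) hzu
    exact ⟨w, Or.inl ⟨hwD, hwv⟩, hwz⟩

lemma secureDominates_of_forall_exists_swap
    (h : ∀ u ∉ D, ∃ v ∈ D, H.Adj u v ∧ ∀ z ∉ D, z ≠ u → ∃ w ∈ D, w ≠ v ∧ H.Adj w z) :
    SecureDominates H D := by
  refine ⟨fun u hu => ?_, fun u hu => ?_⟩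
  · obtain ⟨v, hv, huv, -⟩ := h u hu
    exact ⟨v, hv, huv.symm⟩
  · obtain ⟨v, hv, huv, hswap⟩ := h u hu
    exact ⟨v, hv, huv, dominates_swap huv hswap⟩

lemma secDomNum_le_ncard (h : SecureDominates H D) : secDomNum H ≤ D.ncard :=
  Nat.sInf_le ⟨D, h, rfl⟩

end Domination

section NotStar

variable {V : Type*} {G : SimpleGraph V}

lemma eq_or_adj_of_reachable {v a : V} (hv : ∀ w, G.Adj v w → ∀ x, G.Adj w x → x = v)
    (h : G.Reachable a v) : a = v ∨ G.Adj v a := by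
  obtain ⟨p⟩ := h
  induction p with
  | nil => exact Or.inl rfl
  | cons hab _ ih =>
    rcases ih hv with rfl | hvb
    · exact Or.inr hab.symm
    · exact Or.inl (hv _ hvb _ hab.symm)

lemma isStar_of_forall_adj_adj_eq (hconn : G.Connected) {v : V}
    (hv : ∀ w, G.Adj v w → ∀ x, G.Adj w x → x = v) : IsStar G := by
  have adj_of_ne : ∀ {a}, a ≠ v → G.Adj v a := fun ha =>
    (eq_or_adj_of_reachable hv (hconn.preconnected _ _)).resolve_left ha
  refine ⟨v, fun a b => ⟨fun hab => ⟨hab.ne, ?_⟩, ?_⟩⟩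
  · by_cases ha : a = v
    · exact Or.inl ha
    · exact Or.inr (hv a (adj_of_ne ha) b hab)
  · rintro ⟨hne, rfl | rfl⟩
    · exact adj_of_ne hne.symm
    · exact (adj_of_ne hne).symm

lemma exists_adj_adj_ne_of_not_isStar (hconn : G.Connected) (hstar : ¬ IsStar G) (v : V) :
    ∃ w x, G.Adj v w ∧ G.Adj w x ∧ x ≠ v := by
  by_contra! h
  exact hstar (isStar_of_forall_adj_adj_eq hconn fun w hvw x hwx => h w x hvw hwx)

end NotStar

section Subdivision

variable {V : Type*} [LinearOrder V] {G : SimpleGraph V}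

def OEdge.toSym2 (e : OEdge G) : Sym2 V := s(e.1.1, e.1.2)

lemma OEdge.mem_toSym2 {e : OEdge G} {a : V} : a ∈ e.toSym2 ↔ a = e.1.1 ∨ a = e.1.2 :=
  Sym2.mem_iff

lemma OEdge.toSym2_injective : Function.Injective (OEdge.toSym2 (G := G)) := by
  rintro ⟨⟨a, b⟩, -, hab⟩ ⟨⟨c, d⟩, -, hcd⟩ (h : s(a, b) = s(c, d))
  rcases Sym2.eq_iff.mp h with ⟨rfl, rfl⟩ | ⟨rfl, rfl⟩
  · rfl
  · exact absurd (hab.trans hcd) (lt_irrefl a)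

lemma OEdge.exists_toSym2_eq {a b : V} (h : G.Adj a b) : ∃ e : OEdge G, e.toSym2 = s(a, b) := by
  rcases h.ne.lt_or_gt with hab | hba
  · exact ⟨⟨(a, b), h, hab⟩, rfl⟩
  · exact ⟨⟨(b, a), h.symm, hba⟩, Sym2.eq_swap⟩

noncomputable def OEdge.equivEdgeSet : OEdge G ≃ G.edgeSet :=
  Equiv.ofBijective (fun e => ⟨e.toSym2, e.2.1⟩)
    ⟨fun _ _ h => OEdge.toSym2_injective (congrArg Subtype.val h), by
      rintro ⟨z, hz⟩
      induction z using Sym2.ind with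
      | _ a b =>
        obtain ⟨e, he⟩ := OEdge.exists_toSym2_eq ((mem_edgeSet G).mp hz)
        exact ⟨e, Subtype.ext he⟩⟩

lemma subdiv_two_adj_inl_inr {u : V} {e : OEdge G} {i : Fin (2 - 1)} :
    (Subdiv G 2).Adj (Sum.inl u) (Sum.inr (e, i)) ↔ u ∈ e.toSym2 := by
  simp [Subdiv, OEdge.mem_toSym2]

theorem secDomNum_subdiv_two_le_card (G : SimpleGraph V) :
    secDomNum (Subdiv G 2) ≤ Nat.card V := by
  rw [← Set.ncard_range_of_injective Sum.inl_injective]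
  refine secDomNum_le_ncard (secureDominates_of_forall_exists_swap ?_)
  rintro (u | ⟨e, i⟩) hu
  · exact absurd ⟨u, rfl⟩ hu
  refine ⟨Sum.inl e.1.1, ⟨_, rfl⟩, (subdiv_two_adj_inl_inr.mpr (Sym2.mem_mk_left _ _)).symm, ?_⟩
  rintro (z | ⟨f, j⟩) hz -
  · exact absurd ⟨z, rfl⟩ hz
  by_cases hf : f.1.1 = e.1.1
  · refine ⟨Sum.inl f.1.2, ⟨_, rfl⟩, ?_, subdiv_two_adj_inl_inr.mpr (Sym2.mem_mk_right _ _)⟩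
    simpa [← hf] using f.2.2.ne'
  · exact ⟨Sum.inl f.1.1, ⟨_, rfl⟩, by simpa using hf,
      subdiv_two_adj_inl_inr.mpr (Sym2.mem_mk_left _ _)⟩

lemma OEdge.exists_mem_toSym2_ne {v w x y : V} {e : OEdge G} (he : e.toSym2 = s(v, w))
    (hwx : G.Adj w x) (hxv : x ≠ v) (hyv : y ≠ v) (hy : ∃ z, G.Adj y z) :
    ∃ g : OEdge G, y ∈ g.toSym2 ∧ g ≠ e := by
  by_cases hyw : y = w
  · obtain ⟨f, hf⟩ := OEdge.exists_toSym2_eq hwx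
    refine ⟨f, hf ▸ hyw ▸ Sym2.mem_mk_left _ _, fun hfe => ?_⟩
    rcases Sym2.eq_iff.mp (hf.symm.trans (hfe ▸ he)) with ⟨-, hxw⟩ | ⟨-, hxv'⟩
    · exact hwx.ne hxw.symm
    · exact hxv hxv'
  · obtain ⟨z, hyz⟩ := hy
    obtain ⟨g, hg⟩ := OEdge.exists_toSym2_eq hyz
    refine ⟨g, hg ▸ Sym2.mem_mk_left _ _, ?_⟩
    rintro rfl
    have hye : y ∈ s(v, w) := he ▸ hg ▸ Sym2.mem_mk_left _ _
    exact (Sym2.mem_iff.mp hye).elim hyv hyw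

theorem secDomNum_subdiv_two_le_card_oedge (hconn : G.Connected) (hstar : ¬ IsStar G) :
    secDomNum (Subdiv G 2) ≤ Nat.card (OEdge G) := by
  have hcard : Nat.card (OEdge G × Fin (2 - 1)) = Nat.card (OEdge G) := by simp
  rw [← hcard, ← Set.ncard_range_of_injective Sum.inr_injective]
  refine secDomNum_le_ncard (secureDominates_of_forall_exists_swap ?_)
  rintro (v | a) hv
  swap
  · exact absurd ⟨a, rfl⟩ hv
  obtain ⟨w, x, hvw, hwx, hxv⟩ := exists_adj_adj_ne_of_not_isStar hconn hstar v
  obtain ⟨e, he⟩ := OEdge.exists_toSym2_eq hvw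
  refine ⟨Sum.inr (e, 0), ⟨_, rfl⟩, subdiv_two_adj_inl_inr.mpr (he ▸ Sym2.mem_mk_left _ _), ?_⟩
  rintro (y | a) hy hyv
  swap
  · exact absurd ⟨a, rfl⟩ hy
  obtain ⟨w', -, hyw', -⟩ := exists_adj_adj_ne_of_not_isStar hconn hstar y
  obtain ⟨g, hyg, hge⟩ :=
    OEdge.exists_mem_toSym2_ne he hwx hxv (fun h => hyv (congrArg Sum.inl h)) ⟨w', hyw'⟩
  exact ⟨Sum.inr (g, 0), ⟨_, rfl⟩, by simpa using hge, (subdiv_two_adj_inl_inr.mpr hyg).symm⟩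

end Subdivision

theorem stmt_2_general {V : Type*} [LinearOrder V] (G : SimpleGraph V)
    (hconn : G.Connected) (hstar : ¬ IsStar G) :
    secDomNum (Subdiv G 2) ≤ min (Nat.card G.edgeSet) (Nat.card V) := by
  rw [← Nat.card_congr OEdge.equivEdgeSet]
  exact le_min (secDomNum_subdiv_two_le_card_oedge hconn hstar)
    (secDomNum_subdiv_two_le_card G)

/-- If `G` is a finite simple connected graph that is not a star, then
`γₛ(G^{1/2}) ≤ min {|E(G)|, |V(G)|}`. -/
theorem stmt_2 {V : Type*} [Fintype V] [LinearOrder V] (G : SimpleGraph V)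
    (hconn : G.Connected) (hstar : ¬ IsStar G) :
    secDomNum (Subdiv G 2) ≤ min (Nat.card G.edgeSet) (Nat.card V) :=
  stmt_2_general G hconn hstar
end

section
/- For any finite simple graph G, the domination number of the 3-subdivision satisfies γ(G^{1/3}) = |V(G)|; in particular every dominating set of G^{1/3} has at least |V(G)| vertices. -/
open SimpleGraph

/- The vertices of `G` dominate `G^{1/3}`, since each subdivision vertex is adjacent to an endpoint
of its edge. Conversely, the closed neighbourhoods of two distinct vertices of `G` are disjoint in
`G^{1/3}` (they lie at distance 3), so a dominating set needs a separate vertex in each of them. -/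

section Packing

variable {W : Type*} {H : SimpleGraph W}

theorem Dominates.ncard_le_of_closedNbhd_disjoint [Finite W] {D S : Set W}
    (hD : Dominates H D)
    (hS : ∀ u ∈ S, ∀ v ∈ S, ∀ x,
      (x = u ∨ H.Adj x u) → (x = v ∨ H.Adj x v) → u = v) :
    S.ncard ≤ D.ncard := by
  have hchoice : ∀ u : S, ∃ x ∈ D, x = u ∨ H.Adj x u := fun u => by
    by_cases hu : (u : W) ∈ D
    · exact ⟨u, hu, Or.inl rfl⟩
    · obtain ⟨x, hxD, hxu⟩ := hD u hu
      exact ⟨x, hxD, Or.inr hxu⟩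
  choose f hfD hf using hchoice
  have hinj : Function.Injective fun u : S => (⟨f u, hfD u⟩ : D) := fun u v huv =>
    have hfuv : f u = f v := congrArg Subtype.val huv
    Subtype.ext (hS u u.2 v v.2 (f u) (hf u) (hfuv ▸ hf v))
  rw [← Nat.card_coe_set_eq, ← Nat.card_coe_set_eq]
  exact Nat.card_le_card_of_injective _ hinj

theorem domNum_eq_of_dominates {D : Set W} (hD : Dominates H D)
    (hmin : ∀ D' : Set W, Dominates H D' → D.ncard ≤ D'.ncard) :
    domNum H = D.ncard := by
  refine le_antisymm (Nat.sInf_le ⟨D, hD, rfl⟩) ?_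
  obtain ⟨D', hD', hcard⟩ := Nat.sInf_mem (⟨_, D, hD, rfl⟩ :
    {n | ∃ D : Set W, Dominates H D ∧ D.ncard = n}.Nonempty)
  rw [domNum, ← hcard]
  exact hmin D' hD'

end Packing

section Subdivision

variable {V : Type*} [LinearOrder V] {G : SimpleGraph V} {k : ℕ}

theorem subdiv_not_adj_inl_inl (u v : V) : ¬(Subdiv G k).Adj (.inl u) (.inl v) := by
  simp [Subdiv]

theorem subdiv_adj_inl_inr (u : V) (e : OEdge G) (i : Fin (k - 1)) :
    (Subdiv G k).Adj (.inl u) (.inr (e, i)) ↔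
      (i.val = 0 ∧ u = e.val.1) ∨ (i.val = k - 2 ∧ u = e.val.2) := by
  simp [Subdiv]

theorem subdiv_dominates_range_inl (hk : k ≤ 3) :
    Dominates (Subdiv G k) (Set.range Sum.inl) := by
  rintro (v | ⟨e, i⟩) hx
  · exact absurd (Set.mem_range_self v) hx
  · have hi := i.isLt
    rcases Nat.lt_or_ge i.val 1 with hi0 | hi1
    · exact ⟨.inl e.val.1, Set.mem_range_self _,
        (subdiv_adj_inl_inr _ _ _).2 (Or.inl ⟨by omega, rfl⟩)⟩
    · exact ⟨.inl e.val.2, Set.mem_range_self _,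
        (subdiv_adj_inl_inr _ _ _).2 (Or.inr ⟨by omega, rfl⟩)⟩

theorem subdiv_inl_closedNbhd_disjoint (hk : 3 ≤ k) (u v : V) (x : V ⊕ (OEdge G × Fin (k - 1)))
    (hu : x = .inl u ∨ (Subdiv G k).Adj x (.inl u))
    (hv : x = .inl v ∨ (Subdiv G k).Adj x (.inl v)) : u = v := by
  rcases x with w | ⟨e, i⟩
  · simp only [Sum.inl.injEq, subdiv_not_adj_inl_inl, or_false] at hu hv
    exact hu.symm.trans hv
  · simp only [reduceCtorEq, false_or, (Subdiv G k).adj_comm (.inr _), subdiv_adj_inl_inr] at hu hv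
    rcases hu with ⟨hi, rfl⟩ | ⟨hi, rfl⟩ <;> rcases hv with ⟨hi', rfl⟩ | ⟨hi', rfl⟩
    all_goals first | rfl | omega

end Subdivision

/-- For any finite simple graph `G`, `γ(G^{1/3}) = |V(G)|`; in particular every
dominating set of `G^{1/3}` has at least `|V(G)|` vertices. -/
theorem stmt_6 {V : Type*} [Fintype V] [LinearOrder V] (G : SimpleGraph V) :
    domNum (Subdiv G 3) = Nat.card V ∧
    ∀ D : Set (V ⊕ (OEdge G × Fin (3 - 1))), Dominates (Subdiv G 3) D →
      Nat.card V ≤ D.ncard := by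
  have hcard : (Set.range (Sum.inl : V → V ⊕ (OEdge G × Fin (3 - 1)))).ncard = Nat.card V :=
    Set.ncard_range_of_injective Sum.inl_injective
  have hlower (D : Set (V ⊕ (OEdge G × Fin (3 - 1)))) (hD : Dominates (Subdiv G 3) D) :
      Nat.card V ≤ D.ncard := by
    rw [← hcard]
    refine hD.ncard_le_of_closedNbhd_disjoint ?_
    rintro _ ⟨u, rfl⟩ _ ⟨v, rfl⟩ x hu hv
    rw [subdiv_inl_closedNbhd_disjoint le_rfl u v x hu hv]
  refine ⟨?_, hlower⟩
  rw [← hcard]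
  exact domNum_eq_of_dominates (subdiv_dominates_range_inl le_rfl) (hcard ▸ hlower)
end

section
/- For the star graph S_n = K_{1,n−1} with n ≥ 2 vertices, γ_s(S_n^{1/3}) = n = |V(S_n)|, so the lower bound |V(G)| for the secure domination number of the 3-subdivision is attained. -/
open SimpleGraph

/-!
Every vertex `w` of `G^{1/3}` has exactly one original vertex within distance one, its anchor:
`w` itself, or the nearer endpoint of the subdivided edge carrying `w`. A dominating set must
meet the closed neighbourhood of each original vertex `v`, and the anchor map sends that part
of it to `v`; so anchors map every dominating set onto `V(G)`, and `γₛ(G^{1/3}) ≥ |V(G)|`.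

For the star, the centre together with the subdivision vertices next to the leaves is a secure
dominating set on which the anchor map is injective, hence of size `n`. A leaf outside it is
swapped with its subdivision neighbour, a subdivision vertex next to the centre with the centre.
-/

section Domination

variable {W : Type*} {H : SimpleGraph W}

theorem secureDominates_univ : SecureDominates H Set.univ :=
  ⟨fun v hv => absurd (Set.mem_univ v) hv, fun u hu => absurd (Set.mem_univ u) hu⟩

theorem secDomNum_le {D : Set W} (hD : SecureDominates H D) : secDomNum H ≤ D.ncard :=
  Nat.sInf_le ⟨D, hD, rfl⟩

theorem le_secDomNum {k : ℕ} (h : ∀ D, SecureDominates H D → k ≤ D.ncard) :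
    k ≤ secDomNum H :=
  le_csInf ⟨_, Set.univ, secureDominates_univ, rfl⟩ (by rintro _ ⟨D, hD, rfl⟩; exact h D hD)

end Domination

namespace Subdiv

variable {V : Type*} [LinearOrder V] {G : SimpleGraph V}

def anchor : V ⊕ (OEdge G × Fin 2) → V
  | .inl v => v
  | .inr (e, i) => if i = 0 then e.val.1 else e.val.2

theorem anchor_inl (v : V) : anchor (.inl v : V ⊕ (OEdge G × Fin 2)) = v := rfl

theorem anchor_inr_one (e : OEdge G) : anchor (.inr (e, 1)) = e.val.2 := rfl

theorem not_adj_inl_inl (u v : V) : ¬(Subdiv G 3).Adj (.inl u) (.inl v) := by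
  simp [Subdiv]

theorem adj_inr_inl (x : OEdge G × Fin 2) (v : V) :
    (Subdiv G 3).Adj (.inr x) (.inl v) ↔ anchor (.inr x) = v := by
  obtain ⟨e, i⟩ := x
  fin_cases i <;> simp [Subdiv, anchor, eq_comm]

theorem adj_inl_inr (v : V) (x : OEdge G × Fin 2) :
    (Subdiv G 3).Adj (.inl v) (.inr x) ↔ anchor (.inr x) = v := by
  rw [adj_comm, adj_inr_inl]

theorem adj_inr_inr (e f : OEdge G) (i j : Fin 2) :
    (Subdiv G 3).Adj (.inr (e, i)) (.inr (f, j)) ↔ e = f ∧ i ≠ j := by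
  simp only [Subdiv, fromRel_adj, ne_eq, Sum.inr.injEq, Prod.mk.injEq]
  constructor
  · rintro ⟨-, ⟨rfl, h⟩ | ⟨rfl, h⟩⟩ <;> exact ⟨rfl, by omega⟩
  · rintro ⟨rfl, h⟩
    simp only [true_and, h, not_false_eq_true]
    omega

theorem anchor_eq_of_adj {w : V ⊕ (OEdge G × Fin 2)} {v : V} (h : (Subdiv G 3).Adj w (.inl v)) :
    anchor w = v := by
  obtain w | x := w
  · exact absurd h (not_adj_inl_inl w v)
  · exact (adj_inr_inl x v).1 h

theorem anchor_image_eq_univ_of_dominates {D : Set (V ⊕ (OEdge G × Fin 2))}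
    (hD : Dominates (Subdiv G 3) D) : anchor '' D = Set.univ := by
  refine Set.eq_univ_of_forall fun v => ?_
  by_cases hv : .inl v ∈ D
  · exact ⟨_, hv, rfl⟩
  · obtain ⟨w, hw, hadj⟩ := hD _ hv
    exact ⟨w, hw, anchor_eq_of_adj hadj⟩

theorem card_le_ncard_of_dominates [Finite V] {D : Set (V ⊕ (OEdge G × Fin 2))}
    (hD : Dominates (Subdiv G 3) D) : Nat.card V ≤ D.ncard := by
  have h := Set.ncard_image_le (f := anchor) (Set.toFinite D)
  rwa [anchor_image_eq_univ_of_dominates hD, Set.ncard_univ] at h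

end Subdiv

section Star

open Subdiv

variable {n : ℕ}

theorem adj_starGraph_iff {u v : Fin n} :
    (_root_.starGraph n).Adj u v ↔ u ≠ v ∧ (u.val = 0 ∨ v.val = 0) := by
  simp [_root_.starGraph]

theorem star_edge_fst_val (e : OEdge (_root_.starGraph n)) : e.val.1.val = 0 := by
  obtain ⟨⟨a, b⟩, hadj, hlt⟩ := e
  rw [adj_starGraph_iff] at hadj
  rw [Fin.lt_def] at hlt
  dsimp only at *
  omega

theorem star_edge_snd_val_ne_zero (e : OEdge (_root_.starGraph n)) : e.val.2.val ≠ 0 := by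
  have hlt : e.val.1.val < e.val.2.val := e.prop.2
  omega

theorem star_edge_ext {e f : OEdge (_root_.starGraph n)} (h : e.val.2 = f.val.2) : e = f :=
  Subtype.ext (Prod.ext (Fin.ext (by rw [star_edge_fst_val, star_edge_fst_val])) h)

theorem exists_star_edge_snd_eq {v : Fin n} (hv : v.val ≠ 0) :
    ∃ e : OEdge (_root_.starGraph n), e.val.2 = v :=
  ⟨⟨(⟨0, by omega⟩, v), adj_starGraph_iff.2 ⟨fun h => hv (congrArg Fin.val h).symm, Or.inl rfl⟩,
    Fin.lt_def.2 (by dsimp only; omega)⟩, rfl⟩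

def starSecureSet (n : ℕ) : Set (Fin n ⊕ (OEdge (_root_.starGraph n) × Fin 2)) :=
  {w | Sum.elim (fun v => v.val = 0) (fun x => x.2 = 1) w}

@[simp]
theorem inl_mem_starSecureSet {v : Fin n} : .inl v ∈ starSecureSet n ↔ v.val = 0 := Iff.rfl

@[simp]
theorem inr_mem_starSecureSet {x : OEdge (_root_.starGraph n) × Fin 2} :
    .inr x ∈ starSecureSet n ↔ x.2 = 1 := Iff.rfl

theorem dominates_starSecureSet :
    Dominates (Subdiv (_root_.starGraph n) 3) (starSecureSet n) := by
  rintro (v | ⟨e, i⟩) hw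
  · obtain ⟨e, he⟩ := exists_star_edge_snd_eq (by simpa using hw)
    exact ⟨.inr (e, 1), rfl, (adj_inr_inl _ _).2 he⟩
  · exact ⟨.inr (e, 1), rfl, (adj_inr_inr _ _ _ _).2 ⟨rfl, Ne.symm (by simpa using hw)⟩⟩

theorem injOn_anchor_starSecureSet : Set.InjOn anchor (starSecureSet n) := by
  rintro (u | ⟨e, i⟩) hu (v | ⟨f, j⟩) hv h
  · exact congrArg _ h
  · simp only [inl_mem_starSecureSet, inr_mem_starSecureSet] at hu hv
    subst hv
    rw [anchor_inl, anchor_inr_one] at h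
    exact absurd (h ▸ hu) (star_edge_snd_val_ne_zero f)
  · simp only [inl_mem_starSecureSet, inr_mem_starSecureSet] at hu hv
    subst hu
    rw [anchor_inl, anchor_inr_one] at h
    exact absurd (h ▸ hv) (star_edge_snd_val_ne_zero e)
  · simp only [inr_mem_starSecureSet] at hu hv
    subst hu hv
    exact congrArg (fun e => Sum.inr (e, 1)) (star_edge_ext h)

theorem ncard_starSecureSet : (starSecureSet n).ncard = n := by
  rw [← injOn_anchor_starSecureSet.ncard_image,
    anchor_image_eq_univ_of_dominates dominates_starSecureSet, Set.ncard_univ, Nat.card_fin]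

theorem dominates_swap_leaf (e : OEdge (_root_.starGraph n)) :
    Dominates (Subdiv (_root_.starGraph n) 3)
      (starSecureSet n \ {.inr (e, 1)} ∪ {.inl e.val.2}) := by
  rintro (t | ⟨f, j⟩) hw
  · obtain ⟨hte, ht⟩ : t ≠ e.val.2 ∧ t.val ≠ 0 := by simpa using hw
    obtain ⟨f, rfl⟩ := exists_star_edge_snd_eq ht
    refine ⟨.inr (f, 1), Or.inl ⟨rfl, ?_⟩, (adj_inr_inl _ _).2 rfl⟩
    simpa using fun h : f = e => hte (h ▸ rfl)
  · fin_cases j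
    · exact ⟨.inl f.val.1, Or.inl ⟨star_edge_fst_val f, by simp⟩, (adj_inl_inr _ _).2 rfl⟩
    · have hf : f = e := by simpa using hw
      subst hf
      exact ⟨.inl f.val.2, Or.inr rfl, (adj_inl_inr _ _).2 rfl⟩

theorem dominates_swap_centre (e : OEdge (_root_.starGraph n)) :
    Dominates (Subdiv (_root_.starGraph n) 3)
      (starSecureSet n \ {.inl e.val.1} ∪ {.inr (e, 0)}) := by
  rintro (t | ⟨f, j⟩) hw
  · by_cases ht : t.val = 0
    · have : e.val.1 = t := Fin.ext ((star_edge_fst_val e).trans ht.symm)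
      exact ⟨.inr (e, 0), Or.inr rfl, (adj_inr_inl _ _).2 this⟩
    · obtain ⟨f, rfl⟩ := exists_star_edge_snd_eq ht
      exact ⟨.inr (f, 1), Or.inl ⟨rfl, by simp⟩, (adj_inr_inl _ _).2 rfl⟩
  · have hj : j ≠ 1 := fun h => hw (Or.inl ⟨h, by simp⟩)
    exact ⟨.inr (f, 1), Or.inl ⟨rfl, by simp⟩, (adj_inr_inr _ _ _ _).2 ⟨rfl, hj.symm⟩⟩

theorem secureDominates_starSecureSet :
    SecureDominates (Subdiv (_root_.starGraph n) 3) (starSecureSet n) := by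
  refine ⟨dominates_starSecureSet, ?_⟩
  rintro (v | ⟨e, i⟩) hw
  · obtain ⟨e, rfl⟩ := exists_star_edge_snd_eq hw
    exact ⟨.inr (e, 1), rfl, (adj_inl_inr _ _).2 rfl, dominates_swap_leaf e⟩
  · fin_cases i
    · exact ⟨.inl e.val.1, star_edge_fst_val e, (adj_inr_inl _ _).2 rfl, dominates_swap_centre e⟩
    · exact absurd rfl hw

end Star

theorem stmt_7_general (n : ℕ) :
    secDomNum (Subdiv (_root_.starGraph n) 3) = n :=
  le_antisymm ((secDomNum_le secureDominates_starSecureSet).trans_eq ncard_starSecureSet)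
    (le_secDomNum fun _ hD => by simpa using Subdiv.card_le_ncard_of_dominates hD.1)

/-- For the star `Sₙ = K_{1,n-1}` with `n ≥ 2` vertices,
`γₛ(Sₙ^{1/3}) = n = |V(Sₙ)|`. -/
theorem stmt_7 (n : ℕ) (hn : 2 ≤ n) :
    secDomNum (Subdiv (_root_.starGraph n) 3) = n :=
  stmt_7_general n
end

section
/- For any simple graph G with no isolated vertices, the set of all internal (subdivision) vertices of G^{1/3} — i.e., the set {x_1^{uv}, x_2^{uv} : uv ∈ E(G)} — is a secure dominating set of G^{1/3} of size 2|E(G)|. -/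
open SimpleGraph

/-! In `G^{1/k}` with `k ≥ 3`, every original vertex that is not isolated in `G` has an internal
neighbour, and every internal vertex has at most one original neighbour. A dominating set in
which no member sees two vertices outside the set is automatically secure. -/

/- Swapping `u ∉ D` with its neighbour `v ∈ D` exposes only `v`, which `u` dominates: every
other outside vertex keeps a neighbour in `D`, and that neighbour is not `v`. -/
theorem secureDominates_of_subsingleton_outer_nbrs {W : Type*} {H : SimpleGraph W} {D : Set W}
    (hdom : Dominates H D)
    (hsub : ∀ v ∈ D, ∀ u ∉ D, ∀ u' ∉ D, H.Adj v u → H.Adj v u' → u = u') :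
    SecureDominates H D := by
  refine ⟨hdom, fun u hu => ?_⟩
  obtain ⟨v, hvD, hvu⟩ := hdom u hu
  refine ⟨v, hvD, hvu.symm, fun y hy => ?_⟩
  by_cases hyv : y = v
  · exact ⟨u, Or.inr rfl, hyv ▸ hvu.symm⟩
  have hyD : y ∉ D := fun hyD => hy (Or.inl ⟨hyD, hyv⟩)
  have hyu : y ≠ u := fun hyu => hy (Or.inr hyu)
  obtain ⟨v', hv'D, hv'y⟩ := hdom y hyD
  have hv'v : v' ≠ v := by
    rintro rfl
    exact hyu (hsub v' hv'D y hyD u hu hv'y hvu)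
  exact ⟨v', Or.inl ⟨hv'D, hv'v⟩, hv'y⟩

section Subdiv

variable {V : Type*} [LinearOrder V] {G : SimpleGraph V} {k : ℕ}

theorem subdiv_adj_inl_inr_iff {u : V} {e : OEdge G} {i : Fin (k - 1)} :
    (Subdiv G k).Adj (Sum.inl u) (Sum.inr (e, i)) ↔
      (i.val = 0 ∧ u = e.val.1) ∨ (i.val = k - 2 ∧ u = e.val.2) := by
  simp [Subdiv, SimpleGraph.fromRel_adj]

theorem exists_subdiv_adj_inr_of_adj (hk : 2 ≤ k) {u w : V} (huw : G.Adj u w) :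
    ∃ x, (Subdiv G k).Adj (Sum.inl u) (Sum.inr x) := by
  rcases huw.ne.lt_or_gt with hlt | hlt
  · exact ⟨(⟨(u, w), huw, hlt⟩, ⟨0, by omega⟩), subdiv_adj_inl_inr_iff.2 (Or.inl ⟨rfl, rfl⟩)⟩
  · exact ⟨(⟨(w, u), huw.symm, hlt⟩, ⟨k - 2, by omega⟩),
      subdiv_adj_inl_inr_iff.2 (Or.inr ⟨rfl, rfl⟩)⟩

theorem eq_of_subdiv_adj_inr (hk : 3 ≤ k) {u u' : V} {x : OEdge G × Fin (k - 1)}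
    (hu : (Subdiv G k).Adj (Sum.inl u) (Sum.inr x))
    (hu' : (Subdiv G k).Adj (Sum.inl u') (Sum.inr x)) : u = u' := by
  rw [subdiv_adj_inl_inr_iff] at hu hu'
  rcases hu with ⟨hi, rfl⟩ | ⟨hi, rfl⟩ <;> rcases hu' with ⟨hi', rfl⟩ | ⟨hi', rfl⟩ <;>
    first | rfl | omega

theorem dominates_subdiv_range_inr (hk : 2 ≤ k) (h : ∀ v : V, ∃ u, G.Adj v u) :
    Dominates (Subdiv G k) (Set.range Sum.inr) := by
  rintro (u | x) hu
  · obtain ⟨w, huw⟩ := h u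
    obtain ⟨x, hx⟩ := exists_subdiv_adj_inr_of_adj hk huw
    exact ⟨Sum.inr x, ⟨x, rfl⟩, hx.symm⟩
  · exact absurd ⟨x, rfl⟩ hu

theorem secureDominates_subdiv_range_inr (hk : 3 ≤ k) (h : ∀ v : V, ∃ u, G.Adj v u) :
    SecureDominates (Subdiv G k) (Set.range Sum.inr) := by
  refine secureDominates_of_subsingleton_outer_nbrs (dominates_subdiv_range_inr (by omega) h) ?_
  rintro _ ⟨x, rfl⟩ (u | y) hu (u' | y') hu' hxu hxu'
  · exact congrArg Sum.inl (eq_of_subdiv_adj_inr hk hxu.symm hxu'.symm)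
  · exact absurd ⟨y', rfl⟩ hu'
  · exact absurd ⟨y, rfl⟩ hu
  · exact absurd ⟨y, rfl⟩ hu

theorem ncard_subdiv_range_inr :
    (Set.range (Sum.inr : OEdge G × Fin (k - 1) → V ⊕ (OEdge G × Fin (k - 1)))).ncard =
      Nat.card (OEdge G) * (k - 1) := by
  rw [← Nat.card_coe_set_eq, Nat.card_range_of_injective Sum.inr_injective, Nat.card_prod,
    Nat.card_fin]

end Subdiv

theorem Nat.card_oEdge {V : Type*} [LinearOrder V] (G : SimpleGraph V) :
    Nat.card (OEdge G) = Nat.card G.edgeSet := by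
  refine Nat.card_eq_of_bijective (fun e => ⟨s(e.val.1, e.val.2), e.prop.1⟩) ⟨?_, ?_⟩
  · rintro ⟨⟨a, b⟩, _, hab⟩ ⟨⟨c, d⟩, _, hcd⟩ hfe
    rcases Sym2.eq_iff.mp (congrArg Subtype.val hfe) with ⟨rfl, rfl⟩ | ⟨rfl, rfl⟩
    · rfl
    · exact absurd (hab.trans hcd) (lt_irrefl _)
  · rintro ⟨z, hz⟩
    induction z using Sym2.ind with
    | _ a b =>
      rw [mem_edgeSet] at hz
      rcases hz.ne.lt_or_gt with hlt | hlt
      · exact ⟨⟨(a, b), hz, hlt⟩, rfl⟩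
      · exact ⟨⟨(b, a), hz.symm, hlt⟩, Subtype.ext Sym2.eq_swap⟩

theorem stmt_17_general {V : Type*} [LinearOrder V] (G : SimpleGraph V)
    (h : ∀ v : V, ∃ u, G.Adj v u) :
    SecureDominates (Subdiv G 3) (Set.range Sum.inr) ∧
    (Set.range (Sum.inr : OEdge G × Fin (3 - 1) → V ⊕ (OEdge G × Fin (3 - 1)))).ncard =
      2 * Nat.card G.edgeSet := by
  refine ⟨secureDominates_subdiv_range_inr le_rfl h, ?_⟩
  rw [ncard_subdiv_range_inr, Nat.card_oEdge, mul_comm]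

/-- For any simple graph `G` with no isolated vertices, the set of all internal
(subdivision) vertices of `G^{1/3}` is a secure dominating set of `G^{1/3}` of size `2|E(G)|`. -/
theorem stmt_17 {V : Type*} [Fintype V] [LinearOrder V] (G : SimpleGraph V)
    (h : ∀ v : V, ∃ u, G.Adj v u) :
    SecureDominates (Subdiv G 3) (Set.range Sum.inr) ∧
    (Set.range (Sum.inr : OEdge G × Fin (3 - 1) → V ⊕ (OEdge G × Fin (3 - 1)))).ncard =
      2 * Nat.card G.edgeSet :=
  stmt_17_general G h
end
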